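/- For Dueck's deterministic MAC W as above, if (y₁ⁿ, y₂ⁿ) is a good output (at most n/2 coordinates of y₁ⁿ in {c,C}), then the number of input pairs (x₁ⁿ, x₂ⁿ) ∈ 𝒳₁ⁿ × {0,1}ⁿ with Wⁿ(x₁ⁿ,x₂ⁿ) = (y₁ⁿ,y₂ⁿ) is exactly 2^{ℰ(y₁ⁿ)}, which is at most 2^{n/2}. Moreover x₂ⁿ is uniquely determined: x₂ⁿ = y₂ⁿ. -/

import Mathlib

open scoped BigOperators Classical

/-- First-encoder input alphabet `𝒳₁ = {a, b, A, B}` of Dueck's MAC. -/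
inductive DXA | a | b | A | B
deriving DecidableEq

instance : Fintype DXA := ⟨{.a, .b, .A, .B}, fun x => by cases x <;> simp⟩

/-- First output component alphabet `𝒴₁ = {a, b, c, A, B, C}` of Dueck's MAC. -/
inductive DYA | a | b | c | A | B | C
deriving DecidableEq

instance : Fintype DYA := ⟨{.a, .b, .c, .A, .B, .C}, fun x => by cases x <;> simp⟩

/-- Dueck's deterministic MAC `W : 𝒳₁ × {0,1} → 𝒴₁ × {0,1}`. -/
def DW : DXA → Bool → DYA × Bool
  | .a, false => (.c, false)
  | .b, false => (.c, false)
  | .A, true  => (.C, true)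
  | .B, true  => (.C, true)
  | .a, true  => (.a, true)
  | .b, true  => (.b, true)
  | .A, false => (.A, false)
  | .B, false => (.B, false)

/-- Number of erased coordinates (`c` or `C`) of an output word. -/
noncomputable def erasures (n : ℕ) (y : Fin n → DYA) : ℕ :=
  (Finset.univ.filter fun t => y t = DYA.c ∨ y t = DYA.C).card

/-- An output word is good if at most half of its coordinates are erased. -/
def GoodOut (n : ℕ) (y : Fin n → DYA) : Prop := 2 * erasures n y ≤ n

/-! The channel acts letter by letter, so its preimage of a word is the product of the fibres of
its letters. Since `W` copies `x₂`, the fibre of an achievable letter is a single point unless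
`y₁` is an erasure, in which case it has exactly two points. -/

lemma card_filter_forall_apply_eq {ι α β : Type*} [Fintype ι] [DecidableEq ι] [Fintype α]
    [DecidableEq β] (f : α → β) (z : ι → β)
    [DecidablePred fun x : ι → α => ∀ t, f (x t) = z t] :
    (Finset.univ.filter fun x : ι → α => ∀ t, f (x t) = z t).card =
      ∏ t, (Finset.univ.filter fun a => f a = z t).card := by
  rw [← Fintype.card_piFinset]
  congr 1
  ext x
  simp [Fintype.mem_piFinset]

lemma card_filter_prod_forall_eq {ι α β γ : Type*} [Fintype ι] [DecidableEq ι] [Fintype α]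
    [Fintype β] [DecidableEq γ] (g : α → β → γ) (z : ι → γ)
    [DecidablePred fun p : (ι → α) × (ι → β) => ∀ t, g (p.1 t) (p.2 t) = z t] :
    (Finset.univ.filter fun p : (ι → α) × (ι → β) => ∀ t, g (p.1 t) (p.2 t) = z t).card =
      ∏ t, (Finset.univ.filter fun q : α × β => g q.1 q.2 = z t).card := by
  rw [← card_filter_forall_apply_eq]
  refine Finset.card_equiv (Equiv.arrowProdEquivProdArrow ι (fun _ => α) (fun _ => β)).symm ?_
  simp [Equiv.arrowProdEquivProdArrow]

lemma DW_snd (x : DXA) (b : Bool) : (DW x b).2 = b := by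
  cases x <;> cases b <;> rfl

lemma card_DW_fiber (y : DYA) (b : Bool) (h : ∃ x c, DW x c = (y, b)) :
    (Finset.univ.filter fun q : DXA × Bool => DW q.1 q.2 = (y, b)).card =
      if y = .c ∨ y = .C then 2 else 1 := by
  revert y b
  decide

lemma two_pow_le_two_rpow_half {e n : ℕ} (h : 2 * e ≤ n) : (2 : ℝ) ^ e ≤ 2 ^ ((n : ℝ) / 2) := by
  rw [← Real.rpow_natCast]
  apply Real.rpow_le_rpow_of_exponent_le one_le_two
  have h' : (2 * e : ℝ) ≤ n := by exact_mod_cast h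
  linarith

/-- For a good achievable output `(y₁ⁿ,y₂ⁿ)` of Dueck's MAC, the preimage has exactly
`2^{ℰ(y₁ⁿ)} ≤ 2^{n/2}` elements, and `x₂ⁿ` is uniquely determined: `x₂ⁿ = y₂ⁿ`. -/
theorem dueck_preimage_count (n : ℕ) (y₁ : Fin n → DYA) (y₂ : Fin n → Bool)
    (hach : ∃ (x₁ : Fin n → DXA) (x₂ : Fin n → Bool),
      ∀ t, DW (x₁ t) (x₂ t) = (y₁ t, y₂ t))
    (hgood : GoodOut n y₁) :
    (Finset.univ.filter fun p : (Fin n → DXA) × (Fin n → Bool) =>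
        ∀ t, DW (p.1 t) (p.2 t) = (y₁ t, y₂ t)).card = 2 ^ erasures n y₁ ∧
    (((Finset.univ.filter fun p : (Fin n → DXA) × (Fin n → Bool) =>
        ∀ t, DW (p.1 t) (p.2 t) = (y₁ t, y₂ t)).card : ℝ) ≤ 2 ^ ((n : ℝ) / 2)) ∧
    ∀ p ∈ (Finset.univ.filter fun p : (Fin n → DXA) × (Fin n → Bool) =>
        ∀ t, DW (p.1 t) (p.2 t) = (y₁ t, y₂ t)), p.2 = y₂ := by
  obtain ⟨x₁, x₂, hx⟩ := hach
  have hcount : (Finset.univ.filter fun p : (Fin n → DXA) × (Fin n → Bool) =>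
      ∀ t, DW (p.1 t) (p.2 t) = (y₁ t, y₂ t)).card = 2 ^ erasures n y₁ := by
    rw [card_filter_prod_forall_eq DW fun t => (y₁ t, y₂ t),
      Finset.prod_congr rfl fun t _ => card_DW_fiber (y₁ t) (y₂ t) ⟨x₁ t, x₂ t, hx t⟩,
      ← Finset.prod_filter, Finset.prod_const, erasures]
  refine ⟨hcount, by rw [hcount]; exact_mod_cast two_pow_le_two_rpow_half hgood, ?_⟩
  intro p hp
  funext t
  simpa only [DW_snd] using congrArg Prod.snd ((Finset.mem_filter.mp hp).2 t)
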